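/- arXiv:1309.4759 — 3 statements merged into one kernel-verified Lean document; each statement's English description precedes it below -/
import Mathlib

section
/- Let R be a commutative ℂ-algebra and σ, ω, σ̄ ∈ R. For complex numbers η, ζ, α, β with ζ ≠ 0, |η|² := ηη̄, suppose α = (ζ+η)/(1−η̄ζ) and β = (−ζ+η)/(1+η̄ζ) with 1−η̄²ζ² ≠ 0 and α ≠ β. Then (σ − (α+β)ω − αβσ̄)/(i(α−β)) = (σ − 2ηω − η²σ̄)/(2iζ(1+|η|²)) − iζ(σ̄ − 2η̄ω − η̄²σ)/(2(1+|η|²)). -/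
/-!
Both sides are `ℂ`-linear combinations of `σ`, `ω`, `σ̄`, so it suffices to compare the three
coefficients. Over the common denominator `D = (1 - η̄ζ)(1 + η̄ζ)` one has
`α - β = 2ζ(1 + |η|²)/D`, `α + β = 2(η + η̄ζ²)/D` and `αβ = (η² - ζ²)/D`; in the ratios by
`α - β` the factor `D` cancels, and what is left is a rational identity using `i² = -1`.
-/

open Complex ComplexConjugate

lemma one_add_mul_conj_ne_zero (η : ℂ) : 1 + η * conj η ≠ 0 := by
  rw [mul_conj, ← ofReal_one, ← ofReal_add, ofReal_ne_zero]
  have := normSq_nonneg η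
  positivity

lemma algebraMap_mul_sub_sub {K R : Type*} [CommSemiring K] [Ring R] [Algebra K R]
    (c b d : K) (x y z : R) :
    algebraMap K R c * (x - algebraMap K R b * y - algebraMap K R d * z)
      = c • x - (c * b) • y - (c * d) • z := by
  simp only [Algebra.smul_def, map_mul, mul_sub, mul_assoc]

section Mobius

-- `a` stands for `η̄`.
variable {η a ζ α β : ℂ} (h₁ : 1 - a * ζ ≠ 0) (h₂ : 1 + a * ζ ≠ 0)
  (hα : α = (ζ + η) / (1 - a * ζ)) (hβ : β = (-ζ + η) / (1 + a * ζ))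
include h₁ h₂ hα hβ

lemma mobius_sub : α - β = 2 * ζ * (1 + η * a) / ((1 - a * ζ) * (1 + a * ζ)) := by
  rw [hα, hβ, div_sub_div _ _ h₁ h₂]; ring

lemma mobius_add : α + β = 2 * (η + a * ζ ^ 2) / ((1 - a * ζ) * (1 + a * ζ)) := by
  rw [hα, hβ, div_add_div _ _ h₁ h₂]; ring

omit h₁ h₂ in
lemma mobius_mul : α * β = (η ^ 2 - ζ ^ 2) / ((1 - a * ζ) * (1 + a * ζ)) := by
  rw [hα, hβ, div_mul_div_comm]; ring

variable (hζ : ζ ≠ 0) (hN : 1 + η * a ≠ 0)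
include hζ hN

lemma mobius_coeff_one :
    1 / (I * (α - β)) = 1 / (2 * I * ζ * (1 + η * a)) + I * ζ / (2 * (1 + η * a)) * a ^ 2 := by
  rw [div_mul_eq_div_div_swap, mobius_sub h₁ h₂ hα hβ, one_div_div]
  -- keeps `field_simp` from reordering `1 + η * a` into a form `hN` no longer matches
  set N := 1 + η * a
  field_simp
  linear_combination (-a ^ 2 * ζ ^ 2) * I_sq

lemma mobius_coeff_add :
    1 / (I * (α - β)) * (α + β)
      = 1 / (2 * I * ζ * (1 + η * a)) * (2 * η) - I * ζ / (2 * (1 + η * a)) * (2 * a) := by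
  rw [one_div_mul_eq_div, div_mul_eq_div_div_swap, mobius_sub h₁ h₂ hα hβ, mobius_add h₁ h₂ hα hβ,
    div_div_div_cancel_right₀ (mul_ne_zero h₁ h₂)]
  set N := 1 + η * a
  field_simp
  linear_combination (a * ζ ^ 2) * I_sq

lemma mobius_coeff_mul :
    1 / (I * (α - β)) * (α * β)
      = 1 / (2 * I * ζ * (1 + η * a)) * η ^ 2 + I * ζ / (2 * (1 + η * a)) := by
  rw [one_div_mul_eq_div, div_mul_eq_div_div_swap, mobius_sub h₁ h₂ hα hβ, mobius_mul hα hβ,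
    div_div_div_cancel_right₀ (mul_ne_zero h₁ h₂)]
  set N := 1 + η * a
  field_simp
  linear_combination (-ζ ^ 2) * I_sq

end Mobius

theorem stmt_12_general {R : Type*} [CommRing R] [Algebra ℂ R]
    (σ ω σb : R) (η ζ α β : ℂ) (hζ : ζ ≠ 0)
    (hd1 : 1 - (starRingEnd ℂ) η * ζ ≠ 0) (hd2 : 1 + (starRingEnd ℂ) η * ζ ≠ 0)
    (hα : α = (ζ + η) / (1 - (starRingEnd ℂ) η * ζ))
    (hβ : β = (-ζ + η) / (1 + (starRingEnd ℂ) η * ζ)) :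
    algebraMap ℂ R (1 / (Complex.I * (α - β)))
        * (σ - algebraMap ℂ R (α + β) * ω - algebraMap ℂ R (α * β) * σb)
      = algebraMap ℂ R (1 / (2 * Complex.I * ζ * (1 + η * (starRingEnd ℂ) η)))
            * (σ - algebraMap ℂ R (2 * η) * ω - algebraMap ℂ R (η ^ 2) * σb)
        - algebraMap ℂ R (Complex.I * ζ / (2 * (1 + η * (starRingEnd ℂ) η)))
            * (σb - algebraMap ℂ R (2 * (starRingEnd ℂ) η) * ω
                - algebraMap ℂ R (((starRingEnd ℂ) η) ^ 2) * σ) := by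
  have hN := one_add_mul_conj_ne_zero η
  simp only [algebraMap_mul_sub_sub]
  linear_combination (norm := module) mobius_coeff_one hd1 hd2 hα hβ hζ hN • σ
    - mobius_coeff_add hd1 hd2 hα hβ hζ hN • ω - mobius_coeff_mul hd1 hd2 hα hβ hζ hN • σb

/-- under the Möbius relations `α = (ζ+η)/(1−η̄ζ)`,
`β = (−ζ+η)/(1+η̄ζ)`, one has
`(σ − (α+β)ω − αβσ̄)/(i(α−β)) = (σ − 2ηω − η²σ̄)/(2iζ(1+|η|²)) − iζ(σ̄ − 2η̄ω − η̄²σ)/(2(1+|η|²))`. -/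
theorem stmt_12 {R : Type*} [CommRing R] [Algebra ℂ R]
    (σ ω σb : R) (η ζ α β : ℂ) (hζ : ζ ≠ 0)
    (hd1 : 1 - (starRingEnd ℂ) η * ζ ≠ 0) (hd2 : 1 + (starRingEnd ℂ) η * ζ ≠ 0)
    (hd3 : 1 - ((starRingEnd ℂ) η) ^ 2 * ζ ^ 2 ≠ 0)
    (hα : α = (ζ + η) / (1 - (starRingEnd ℂ) η * ζ))
    (hβ : β = (-ζ + η) / (1 + (starRingEnd ℂ) η * ζ))
    (hαβ : α ≠ β) :
    algebraMap ℂ R (1 / (Complex.I * (α - β)))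
        * (σ - algebraMap ℂ R (α + β) * ω - algebraMap ℂ R (α * β) * σb)
      = algebraMap ℂ R (1 / (2 * Complex.I * ζ * (1 + η * (starRingEnd ℂ) η)))
            * (σ - algebraMap ℂ R (2 * η) * ω - algebraMap ℂ R (η ^ 2) * σb)
        - algebraMap ℂ R (Complex.I * ζ / (2 * (1 + η * (starRingEnd ℂ) η)))
            * (σb - algebraMap ℂ R (2 * (starRingEnd ℂ) η) * ω
                - algebraMap ℂ R (((starRingEnd ℂ) η) ^ 2) * σ) :=
  stmt_12_general σ ω σb η ζ α β hζ hd1 hd2 hα hβ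
end

section
/- Let V be a real inner product space and I₊, I₋ orthogonal complex structures on V (I_±² = −id, g(I_±X, I_±Y) = g(X,Y)), with ω_± := g∘I_± : V → V* the associated Hermitian forms. Define on V ⊕ V* the endomorphisms 𝒥 = (1/2)·[[−(I₊+I₋), −(ω₊⁻¹−ω₋⁻¹)], [ω₊−ω₋, I₊*+I₋*]] and 𝒥′ = (1/2)·[[−(I₊−I₋), −(ω₊⁻¹+ω₋⁻¹)], [ω₊+ω₋, I₊*−I₋*]]. Then 𝒥² = 𝒥′² = −id and 𝒥𝒥′ = 𝒥′𝒥. -/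
/-!
Write `g⁻¹ = I₊ ∘ ω₊⁻¹`; it is a two-sided inverse of `g`, and `ω_±⁻¹ = -I_± ∘ g⁻¹`,
`g⁻¹ ∘ I_±* = -I_± ∘ g⁻¹`. In the coordinates `(x, ξ) ↦ (x + g⁻¹ξ, x - g⁻¹ξ)` on `V ⊕ V*`,
adapted to the splitting into the graphs of `±g`, both `𝒥` and `𝒥′` become diagonal:
`𝒥 = diag(-I₋, -I₊)` and `𝒥′ = diag(I₋, -I₊)`. Diagonal operators with entries `±I_±` square
to `-1` and commute.
-/

section HermitianForm

variable {R V : Type*} [CommRing R] [AddCommGroup V] [Module R V]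
  {g : V →ₗ[R] Module.Dual R V} {I : V →ₗ[R] V} {ωinv : Module.Dual R V →ₗ[R] V}

lemma leftInverse_comp_inv (hI : ∀ x, I (I x) = -x) (hinv : ∀ x, ωinv ((g ∘ₗ I) x) = x) :
    Function.LeftInverse (I ∘ₗ ωinv) g := fun y => by
  have : g y = (g ∘ₗ I) (-I y) := by simp [hI]
  rw [LinearMap.comp_apply, this, hinv, map_neg, hI, neg_neg]

lemma inv_apply_eq_neg_apply {ginv : Module.Dual R V →ₗ[R] V} (hI : ∀ x, I (I x) = -x)
    (hg : Function.LeftInverse ginv g) (hinv : ∀ ξ, (g ∘ₗ I) (ωinv ξ) = ξ) (ξ : Module.Dual R V) :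
    ωinv ξ = -I (ginv ξ) := by
  conv_rhs => rw [← hinv ξ, LinearMap.comp_apply, hg, hI, neg_neg]

lemma dualMap_apply_eq_g_inv (horth : ∀ x y, g (I x) (I y) = g x y)
    (hinv : ∀ ξ, (g ∘ₗ I) (ωinv ξ) = ξ) (ξ : Module.Dual R V) :
    I.dualMap ξ = g (ωinv ξ) := by
  ext y
  conv_lhs => rw [LinearMap.dualMap_apply, ← hinv ξ, LinearMap.comp_apply, horth]

lemma apply_dualMap_apply_eq_neg {ginv : Module.Dual R V →ₗ[R] V} (hI : ∀ x, I (I x) = -x)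
    (hg : Function.LeftInverse ginv g) (horth : ∀ x y, g (I x) (I y) = g x y)
    (hinv : ∀ ξ, (g ∘ₗ I) (ωinv ξ) = ξ) (ξ : Module.Dual R V) :
    ginv (I.dualMap ξ) = -I (ginv ξ) := by
  rw [dualMap_apply_eq_g_inv horth hinv, hg, inv_apply_eq_neg_apply hI hg hinv]

end HermitianForm

section Semiconj

variable {α β : Type*} {f : α → β} {ga ga' σ : α → α} {gb gb' τ : β → β}

lemma Function.Semiconj.apply_apply_of_injective (hf : Function.Injective f)
    (h : Function.Semiconj f ga gb) (hσ : Function.Semiconj f σ τ) (hsq : ∀ y, gb (gb y) = τ y)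
    (x : α) : ga (ga x) = σ x :=
  hf (by rw [h.eq, h.eq, hsq, hσ.eq])

lemma Function.Commute.of_semiconj_of_injective (hf : Function.Injective f)
    (h : Function.Semiconj f ga gb) (h' : Function.Semiconj f ga' gb')
    (hb : Function.Commute gb gb') : Function.Commute ga ga' := fun x =>
  hf (by rw [h.eq, h'.eq, h'.eq, h.eq, hb.eq])

end Semiconj

section Gualtieri

variable {V : Type*} [AddCommGroup V] [Module ℝ V]

noncomputable def gualtieriJ (Ip Im : V →ₗ[ℝ] V) (ωp ωm : V →ₗ[ℝ] Module.Dual ℝ V)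
    (ωpinv ωminv : Module.Dual ℝ V →ₗ[ℝ] V) (p : V × Module.Dual ℝ V) :
    V × Module.Dual ℝ V :=
  ((1 / 2 : ℝ) • (-(Ip p.1 + Im p.1) - (ωpinv p.2 - ωminv p.2)),
   (1 / 2 : ℝ) • ((ωp p.1 - ωm p.1) + (Ip.dualMap p.2 + Im.dualMap p.2)))

noncomputable def gualtieriJ' (Ip Im : V →ₗ[ℝ] V) (ωp ωm : V →ₗ[ℝ] Module.Dual ℝ V)
    (ωpinv ωminv : Module.Dual ℝ V →ₗ[ℝ] V) (p : V × Module.Dual ℝ V) :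
    V × Module.Dual ℝ V :=
  ((1 / 2 : ℝ) • (-(Ip p.1 - Im p.1) - (ωpinv p.2 + ωminv p.2)),
   (1 / 2 : ℝ) • ((ωp p.1 + ωm p.1) + (Ip.dualMap p.2 - Im.dualMap p.2)))

def graphCoords (ginv : Module.Dual ℝ V →ₗ[ℝ] V) (p : V × Module.Dual ℝ V) : V × V :=
  (p.1 + ginv p.2, p.1 - ginv p.2)

lemma graphCoords_injective {ginv : Module.Dual ℝ V →ₗ[ℝ] V} (hginv : Function.Injective ginv) :
    Function.Injective (graphCoords ginv) := by
  rintro ⟨x, ξ⟩ ⟨y, η⟩ h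
  obtain ⟨hsum, hdiff⟩ := Prod.mk.inj h
  refine Prod.ext ?_ (hginv ?_)
  · linear_combination (norm := module) (1 / 2 : ℝ) • hsum + (1 / 2 : ℝ) • hdiff
  · linear_combination (norm := module) (1 / 2 : ℝ) • hsum - (1 / 2 : ℝ) • hdiff

lemma graphCoords_neg (ginv : Module.Dual ℝ V →ₗ[ℝ] V) :
    Function.Semiconj (graphCoords ginv) Neg.neg Neg.neg := fun p => by
  simp only [graphCoords, Prod.fst_neg, Prod.snd_neg, map_neg, Prod.neg_mk, neg_add, neg_sub']

variable {Ip Im : V →ₗ[ℝ] V} {ωp ωm : V →ₗ[ℝ] Module.Dual ℝ V}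
  {ωpinv ωminv ginv : Module.Dual ℝ V →ₗ[ℝ] V}

lemma graphCoords_gualtieriJ (hωp : ∀ x, ginv (ωp x) = Ip x) (hωm : ∀ x, ginv (ωm x) = Im x)
    (hωpinv : ∀ ξ, ωpinv ξ = -Ip (ginv ξ)) (hωminv : ∀ ξ, ωminv ξ = -Im (ginv ξ))
    (hdualp : ∀ ξ, ginv (Ip.dualMap ξ) = -Ip (ginv ξ))
    (hdualm : ∀ ξ, ginv (Im.dualMap ξ) = -Im (ginv ξ)) :
    Function.Semiconj (graphCoords ginv) (gualtieriJ Ip Im ωp ωm ωpinv ωminv)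
      (Prod.map (-Im) (-Ip)) := fun p => by
  simp only [graphCoords, gualtieriJ, map_smul, map_add, map_sub, hωp, hωm, hωpinv,
    hωminv, hdualp, hdualm, Prod.map_apply, Pi.neg_apply, Prod.mk.injEq]
  constructor <;> module

lemma graphCoords_gualtieriJ' (hωp : ∀ x, ginv (ωp x) = Ip x) (hωm : ∀ x, ginv (ωm x) = Im x)
    (hωpinv : ∀ ξ, ωpinv ξ = -Ip (ginv ξ)) (hωminv : ∀ ξ, ωminv ξ = -Im (ginv ξ))
    (hdualp : ∀ ξ, ginv (Ip.dualMap ξ) = -Ip (ginv ξ))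
    (hdualm : ∀ ξ, ginv (Im.dualMap ξ) = -Im (ginv ξ)) :
    Function.Semiconj (graphCoords ginv) (gualtieriJ' Ip Im ωp ωm ωpinv ωminv)
      (Prod.map Im (-Ip)) := fun p => by
  simp only [graphCoords, gualtieriJ', map_smul, map_add, map_sub, hωp, hωm, hωpinv,
    hωminv, hdualp, hdualm, Prod.map_apply, Pi.neg_apply, Prod.mk.injEq]
  constructor <;> module

end Gualtieri

theorem stmt_15_general {V : Type*} [AddCommGroup V] [Module ℝ V]
    (g : V →ₗ[ℝ] Module.Dual ℝ V)
    (Ip Im : V →ₗ[ℝ] V)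
    (hIp : ∀ x, Ip (Ip x) = -x) (hIm : ∀ x, Im (Im x) = -x)
    (horthp : ∀ x y, g (Ip x) (Ip y) = g x y)
    (horthm : ∀ x y, g (Im x) (Im y) = g x y)
    (ωp ωm : V →ₗ[ℝ] Module.Dual ℝ V)
    (hωp : ωp = g ∘ₗ Ip) (hωm : ωm = g ∘ₗ Im)
    (ωpinv ωminv : Module.Dual ℝ V →ₗ[ℝ] V)
    (hp1 : ∀ ξ, ωp (ωpinv ξ) = ξ) (hp2 : ∀ x, ωpinv (ωp x) = x)
    (hm1 : ∀ ξ, ωm (ωminv ξ) = ξ) :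
    let J : V × Module.Dual ℝ V → V × Module.Dual ℝ V := fun p =>
      ((1 / 2 : ℝ) • (-(Ip p.1 + Im p.1) - (ωpinv p.2 - ωminv p.2)),
       (1 / 2 : ℝ) • ((ωp p.1 - ωm p.1) + (Ip.dualMap p.2 + Im.dualMap p.2)))
    let J' : V × Module.Dual ℝ V → V × Module.Dual ℝ V := fun p =>
      ((1 / 2 : ℝ) • (-(Ip p.1 - Im p.1) - (ωpinv p.2 + ωminv p.2)),
       (1 / 2 : ℝ) • ((ωp p.1 + ωm p.1) + (Ip.dualMap p.2 - Im.dualMap p.2)))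
    ∀ p : V × Module.Dual ℝ V,
      J (J p) = -p ∧ J' (J' p) = -p ∧ J (J' p) = J' (J p) := by
  subst hωp hωm
  intro J J'
  set ginv := Ip ∘ₗ ωpinv
  have hg : Function.LeftInverse ginv g := leftInverse_comp_inv hIp hp2
  have hg' : Function.RightInverse ginv g := hp1
  have hΦ := graphCoords_injective hg'.injective
  have hωp (x : V) : ginv ((g ∘ₗ Ip) x) = Ip x := hg _
  have hωm (x : V) : ginv ((g ∘ₗ Im) x) = Im x := hg _
  have hωpinv := inv_apply_eq_neg_apply hIp hg hp1
  have hωminv := inv_apply_eq_neg_apply hIm hg hm1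
  have hdualp := apply_dualMap_apply_eq_neg hIp hg horthp hp1
  have hdualm := apply_dualMap_apply_eq_neg hIm hg horthm hm1
  have hJ := graphCoords_gualtieriJ hωp hωm hωpinv hωminv hdualp hdualm
  have hJ' := graphCoords_gualtieriJ' hωp hωm hωpinv hωminv hdualp hdualm
  refine fun p => ⟨hJ.apply_apply_of_injective hΦ (graphCoords_neg ginv) ?_ p,
    hJ'.apply_apply_of_injective hΦ (graphCoords_neg ginv) ?_ p,
    Function.Commute.of_semiconj_of_injective hΦ hJ hJ' ?_ p⟩ <;>
  · rintro ⟨a, b⟩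
    simp [hIp, hIm]

/-- for orthogonal complex structures `I₊, I₋` on an inner
product space `(V, g)`, with `ω_± = g∘I_±` (invertible, inverses given), the
Gualtieri endomorphisms `𝒥, 𝒥′` of `V ⊕ V*` satisfy `𝒥² = 𝒥′² = −id` and
`𝒥𝒥′ = 𝒥′𝒥`. -/
theorem stmt_15 {V : Type*} [AddCommGroup V] [Module ℝ V]
    (g : V →ₗ[ℝ] Module.Dual ℝ V)
    (Ip Im : V →ₗ[ℝ] V)
    (hIp : ∀ x, Ip (Ip x) = -x) (hIm : ∀ x, Im (Im x) = -x)
    (horthp : ∀ x y, g (Ip x) (Ip y) = g x y)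
    (horthm : ∀ x y, g (Im x) (Im y) = g x y)
    (ωp ωm : V →ₗ[ℝ] Module.Dual ℝ V)
    (hωp : ωp = g ∘ₗ Ip) (hωm : ωm = g ∘ₗ Im)
    (ωpinv ωminv : Module.Dual ℝ V →ₗ[ℝ] V)
    (hp1 : ∀ ξ, ωp (ωpinv ξ) = ξ) (hp2 : ∀ x, ωpinv (ωp x) = x)
    (hm1 : ∀ ξ, ωm (ωminv ξ) = ξ) (hm2 : ∀ x, ωminv (ωm x) = x) :
    let J : V × Module.Dual ℝ V → V × Module.Dual ℝ V := fun p =>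
      ((1 / 2 : ℝ) • (-(Ip p.1 + Im p.1) - (ωpinv p.2 - ωminv p.2)),
       (1 / 2 : ℝ) • ((ωp p.1 - ωm p.1) + (Ip.dualMap p.2 + Im.dualMap p.2)))
    let J' : V × Module.Dual ℝ V → V × Module.Dual ℝ V := fun p =>
      ((1 / 2 : ℝ) • (-(Ip p.1 - Im p.1) - (ωpinv p.2 + ωminv p.2)),
       (1 / 2 : ℝ) • ((ωp p.1 + ωm p.1) + (Ip.dualMap p.2 - Im.dualMap p.2)))
    ∀ p : V × Module.Dual ℝ V,
      J (J p) = -p ∧ J' (J' p) = -p ∧ J (J' p) = J' (J p) :=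
  stmt_15_general g Ip Im hIp hIm horthp horthm ωp ωm hωp hωm ωpinv ωminv hp1 hp2 hm1
end

section
/- With notation as in the bi-Hermitian construction (𝒥, 𝒥′ defined from orthogonal complex structures I₊, I₋ on an inner product space (V,g)), the bilinear form G(e₁,e₂) := −⟨𝒥e₁, 𝒥′e₂⟩ on V ⊕ V*, where ⟨X+ξ, Y+η⟩ = (1/2)(ξ(Y)+η(X)), satisfies G(X+ξ, Y+η) = (1/2)(g(X,Y) + g⁻¹(ξ,η)); in particular G is symmetric and positive definite. -/
/-!
Since `g` is onto, write `ξ = g u`, `η = g v`. Then `ω±⁻¹ ξ = -I± u` and `I±* ξ = -g (I± u)`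
(the `I±` are `g`-skew), so `⟨𝒥e, 𝒥′f⟩` becomes a combination of values of `g` on `X, Y, u, v`
and their images under `I±`, `I₊I₋`, `I₋I₊`. Skew-adjointness gives
`g (I₋ I₊ a) b = g (I₊ I₋ b) a`, which cancels all mixed terms and leaves
`-(1/2)(g(X,Y) + g(u,v))`.
-/

namespace BiHermitian

variable {V : Type*} [AddCommGroup V] [Module ℝ V] (g : V →ₗ[ℝ] Module.Dual ℝ V)
  (ginv : Module.Dual ℝ V →ₗ[ℝ] V)

theorem apply_map_eq_neg {I : V →ₗ[ℝ] V} (hI : ∀ x, I (I x) = -x)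
    (horth : ∀ x y, g (I x) (I y) = g x y) (x y : V) : g x (I y) = -g (I x) y := by
  have h := horth x (I y)
  rw [hI, map_neg] at h
  linarith

theorem dualMap_eq_neg {I : V →ₗ[ℝ] V} (hI : ∀ x, I (I x) = -x)
    (horth : ∀ x y, g (I x) (I y) = g x y) (hg : ∀ ξ, g (ginv ξ) = ξ) (ξ : Module.Dual ℝ V) :
    I.dualMap ξ = -g (I (ginv ξ)) := by
  ext y
  conv_lhs => rw [← hg ξ]
  simp [apply_map_eq_neg g hI horth]

theorem inv_eq_neg {I : V →ₗ[ℝ] V} (hI : ∀ x, I (I x) = -x) (hg : ∀ ξ, g (ginv ξ) = ξ)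
    {ωinv : Module.Dual ℝ V →ₗ[ℝ] V} (hω : ∀ x, ωinv ((g ∘ₗ I) x) = x) (ξ : Module.Dual ℝ V) :
    ωinv ξ = -I (ginv ξ) := by
  have h : (g ∘ₗ I) (-I (ginv ξ)) = ξ := by simp [hI, hg]
  conv_lhs => rw [← h, hω]

theorem apply_comp_comm (hgsymm : ∀ x y, g x y = g y x) {Ip Im : V →ₗ[ℝ] V}
    (hIp : ∀ x, Ip (Ip x) = -x) (hIm : ∀ x, Im (Im x) = -x)
    (horthp : ∀ x y, g (Ip x) (Ip y) = g x y) (horthm : ∀ x y, g (Im x) (Im y) = g x y)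
    (a b : V) : g (Im (Ip a)) b = g (Ip (Im b)) a := by
  rw [hgsymm, apply_map_eq_neg g hIm horthm, apply_map_eq_neg g hIp horthp, neg_neg]

noncomputable def metricForm (e f : V × Module.Dual ℝ V) : ℝ :=
  1 / 2 * (g e.1 f.1 + f.2 (ginv e.2))

variable {g ginv}

theorem metricForm_comm (hgsymm : ∀ x y, g x y = g y x) (hg : ∀ ξ, g (ginv ξ) = ξ)
    (e f : V × Module.Dual ℝ V) : metricForm g ginv e f = metricForm g ginv f e := by
  have hdual : f.2 (ginv e.2) = e.2 (ginv f.2) := by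
    conv_lhs => rw [← hg f.2]
    conv_rhs => rw [← hg e.2]
    exact hgsymm _ _
  rw [metricForm, metricForm, hgsymm, hdual]

theorem metricForm_self_pos (hgpos : ∀ x, x ≠ 0 → 0 < g x x) (hg : ∀ ξ, g (ginv ξ) = ξ)
    {e : V × Module.Dual ℝ V} (he : e ≠ 0) : 0 < metricForm g ginv e e := by
  obtain ⟨X, ξ⟩ := e
  have hnonneg : ∀ x, 0 ≤ g x x := fun x => by
    rcases eq_or_ne x 0 with rfl | hx
    · simp
    · exact (hgpos x hx).le
  have hξ : ξ (ginv ξ) = g (ginv ξ) (ginv ξ) := by rw [hg]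
  simp only [metricForm, hξ]
  rcases eq_or_ne X 0 with rfl | hX
  · have hu : ginv ξ ≠ 0 := fun h0 => he (by rw [← hg ξ, h0, map_zero, Prod.mk_zero_zero])
    simpa using hgpos _ hu
  · linarith [hgpos X hX, hnonneg (ginv ξ)]

end BiHermitian

open BiHermitian in
theorem stmt_16_general {V : Type*} [AddCommGroup V] [Module ℝ V]
    (g : V →ₗ[ℝ] Module.Dual ℝ V)
    (hgsymm : ∀ x y, g x y = g y x)
    (hgpos : ∀ x, x ≠ 0 → 0 < g x x)
    (ginv : Module.Dual ℝ V →ₗ[ℝ] V)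
    (hg1 : ∀ ξ, g (ginv ξ) = ξ)
    (Ip Im : V →ₗ[ℝ] V)
    (hIp : ∀ x, Ip (Ip x) = -x) (hIm : ∀ x, Im (Im x) = -x)
    (horthp : ∀ x y, g (Ip x) (Ip y) = g x y)
    (horthm : ∀ x y, g (Im x) (Im y) = g x y)
    (ωp ωm : V →ₗ[ℝ] Module.Dual ℝ V)
    (hωp : ωp = g ∘ₗ Ip) (hωm : ωm = g ∘ₗ Im)
    (ωpinv ωminv : Module.Dual ℝ V →ₗ[ℝ] V)
    (hp2 : ∀ x, ωpinv (ωp x) = x)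
    (hm2 : ∀ x, ωminv (ωm x) = x) :
    let J : V × Module.Dual ℝ V → V × Module.Dual ℝ V := fun p =>
      ((1 / 2 : ℝ) • (-(Ip p.1 + Im p.1) - (ωpinv p.2 - ωminv p.2)),
       (1 / 2 : ℝ) • ((ωp p.1 - ωm p.1) + (Ip.dualMap p.2 + Im.dualMap p.2)))
    let J' : V × Module.Dual ℝ V → V × Module.Dual ℝ V := fun p =>
      ((1 / 2 : ℝ) • (-(Ip p.1 - Im p.1) - (ωpinv p.2 + ωminv p.2)),
       (1 / 2 : ℝ) • ((ωp p.1 + ωm p.1) + (Ip.dualMap p.2 - Im.dualMap p.2)))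
    let pair : V × Module.Dual ℝ V → V × Module.Dual ℝ V → ℝ := fun e f =>
      (1 / 2 : ℝ) * (e.2 f.1 + f.2 e.1)
    let G : V × Module.Dual ℝ V → V × Module.Dual ℝ V → ℝ := fun e f =>
      -pair (J e) (J' f)
    (∀ (X Y : V) (ξ η : Module.Dual ℝ V),
        G (X, ξ) (Y, η) = (1 / 2 : ℝ) * (g X Y + η (ginv ξ)))
    ∧ (∀ e f, G e f = G f e)
    ∧ (∀ e, e ≠ 0 → 0 < G e e) := by
  subst hωp hωm
  intro J J' pair G
  have hC := apply_comp_comm g hgsymm hIp hIm horthp horthm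
  have formula : ∀ e f, G e f = metricForm g ginv e f := by
    rintro ⟨X, ξ⟩ ⟨Y, η⟩
    simp only [G, pair, J, J', metricForm, inv_eq_neg g ginv hIp hg1 hp2,
      inv_eq_neg g ginv hIm hg1 hm2, dualMap_eq_neg g ginv hIp horthp hg1,
      dualMap_eq_neg g ginv hIm horthm hg1, LinearMap.comp_apply, LinearMap.add_apply,
      LinearMap.sub_apply, LinearMap.neg_apply, LinearMap.smul_apply, map_add, map_sub,
      map_neg, map_smul, smul_eq_mul, hIp, hIm, apply_map_eq_neg g hIp horthp,
      apply_map_eq_neg g hIm horthm, neg_neg]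
    have hη : η (ginv ξ) = g (ginv η) (ginv ξ) := by rw [hg1]
    set u := ginv ξ
    set v := ginv η
    linarith [hC X Y, hC X v, hC u Y, hC u v, hC Y X, hC Y u, hC v X, hC v u,
      hgsymm X Y, hgsymm X v, hgsymm u Y, hgsymm u v]
  refine ⟨fun X Y ξ η => formula _ _, fun e f => ?_, fun e he => ?_⟩
  · rw [formula, formula, metricForm_comm hgsymm hg1]
  · rw [formula]
    exact metricForm_self_pos hgpos hg1 he

/-- with `𝒥, 𝒥′` defined from a pair of `g`-orthogonal complex
structures `I₊, I₋`, the form `G(e₁,e₂) := −⟨𝒥e₁, 𝒥′e₂⟩` on `V ⊕ V*`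
(where `⟨X+ξ, Y+η⟩ = (1/2)(ξ(Y)+η(X))`) satisfies
`G(X+ξ, Y+η) = (1/2)(g(X,Y) + g⁻¹(ξ,η))`; in particular `G` is symmetric and
positive definite. -/
theorem stmt_16 {V : Type*} [AddCommGroup V] [Module ℝ V]
    (g : V →ₗ[ℝ] Module.Dual ℝ V)
    (hgsymm : ∀ x y, g x y = g y x)
    (hgpos : ∀ x, x ≠ 0 → 0 < g x x)
    (ginv : Module.Dual ℝ V →ₗ[ℝ] V)
    (hg1 : ∀ ξ, g (ginv ξ) = ξ) (hg2 : ∀ x, ginv (g x) = x)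
    (Ip Im : V →ₗ[ℝ] V)
    (hIp : ∀ x, Ip (Ip x) = -x) (hIm : ∀ x, Im (Im x) = -x)
    (horthp : ∀ x y, g (Ip x) (Ip y) = g x y)
    (horthm : ∀ x y, g (Im x) (Im y) = g x y)
    (ωp ωm : V →ₗ[ℝ] Module.Dual ℝ V)
    (hωp : ωp = g ∘ₗ Ip) (hωm : ωm = g ∘ₗ Im)
    (ωpinv ωminv : Module.Dual ℝ V →ₗ[ℝ] V)
    (hp1 : ∀ ξ, ωp (ωpinv ξ) = ξ) (hp2 : ∀ x, ωpinv (ωp x) = x)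
    (hm1 : ∀ ξ, ωm (ωminv ξ) = ξ) (hm2 : ∀ x, ωminv (ωm x) = x) :
    let J : V × Module.Dual ℝ V → V × Module.Dual ℝ V := fun p =>
      ((1 / 2 : ℝ) • (-(Ip p.1 + Im p.1) - (ωpinv p.2 - ωminv p.2)),
       (1 / 2 : ℝ) • ((ωp p.1 - ωm p.1) + (Ip.dualMap p.2 + Im.dualMap p.2)))
    let J' : V × Module.Dual ℝ V → V × Module.Dual ℝ V := fun p =>
      ((1 / 2 : ℝ) • (-(Ip p.1 - Im p.1) - (ωpinv p.2 + ωminv p.2)),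
       (1 / 2 : ℝ) • ((ωp p.1 + ωm p.1) + (Ip.dualMap p.2 - Im.dualMap p.2)))
    let pair : V × Module.Dual ℝ V → V × Module.Dual ℝ V → ℝ := fun e f =>
      (1 / 2 : ℝ) * (e.2 f.1 + f.2 e.1)
    let G : V × Module.Dual ℝ V → V × Module.Dual ℝ V → ℝ := fun e f =>
      -pair (J e) (J' f)
    (∀ (X Y : V) (ξ η : Module.Dual ℝ V),
        G (X, ξ) (Y, η) = (1 / 2 : ℝ) * (g X Y + η (ginv ξ)))
    ∧ (∀ e f, G e f = G f e)
    ∧ (∀ e, e ≠ 0 → 0 < G e e) :=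
  stmt_16_general g hgsymm hgpos ginv hg1 Ip Im hIp hIm horthp horthm ωp ωm hωp hωm ωpinv ωminv hp2
    hm2
end
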